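/- For a multiple-input-multiple-output cyclic convolution operator W with kernels w_{i,j} (linking input channel j to output channel i), the sparsity-aware norm ‖W‖_{0,∞} := sup over inputs x with at most one nonzero channel and each channel of Euclidean norm at most 1 of the maximal output-channel Euclidean norm of Wx, equals max_{i,j} ‖F{w_{i,j}}‖_∞, the largest absolute value over all entries of the discrete Fourier transforms of the kernels. -/

import Mathlib

open scoped BigOperators

/-- Euclidean (ℓ²) norm of a signal on `ZMod N`. -/
noncomputable def enorm2 {N : ℕ} [NeZero N] (x : ZMod N → ℂ) : ℝ :=
  Real.sqrt (∑ t, ‖x t‖ ^ 2)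

/-- Cyclic convolution on `ZMod N`. -/
noncomputable def cconv {N : ℕ} [NeZero N] (h x : ZMod N → ℂ) : ZMod N → ℂ :=
  fun t => ∑ s, h s * x (t - s)

/-- Discrete Fourier transform on `ZMod N`. -/
noncomputable def dft {N : ℕ} [NeZero N] (h : ZMod N → ℂ) : ZMod N → ℂ :=
  fun k => ∑ t, h t * Complex.exp (-2 * Real.pi * Complex.I * (k.val * t.val) / N)

/-- The MIMO cyclic convolution operator with kernels `w i j`. -/
noncomputable def mimo {N m n : ℕ} [NeZero N] (w : Fin m → Fin n → ZMod N → ℂ)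
    (x : Fin n → ZMod N → ℂ) : Fin m → ZMod N → ℂ :=
  fun i => ∑ j, cconv (w i j) (x j)

/-!
Convolution on `ZMod N` is diagonalised by the discrete Fourier transform. By the convolution
theorem and Parseval, `‖h ⋆ x‖₂ ≤ (maxₖ |ĥ k|) ‖x‖₂`, and the bound is attained: the character
`t ↦ exp (2πi k t / N)` is an eigenvector of `x ↦ h ⋆ x` with eigenvalue `ĥ k`. An input with a
single nonzero channel `j` produces the outputs `w i j ⋆ x j`, so `‖W‖_{0,∞}` is the largest of
these single-kernel gains.
-/

open scoped ZMod

section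

variable {N : ℕ} [NeZero N]

lemma dft_eq_zmodDFT (h : ZMod N → ℂ) : dft h = 𝓕 h := by
  funext k
  refine Finset.sum_congr rfl fun t _ => ?_
  have hcast : -(t * k) = (((-(k.val * t.val : ℕ) : ℤ)) : ZMod N) := by
    push_cast
    simp only [ZMod.natCast_zmod_val, mul_comm]
  rw [smul_eq_mul, mul_comm, hcast, ZMod.stdAddChar_coe]
  congr 2
  push_cast
  ring

lemma dft_cconv (h x : ZMod N → ℂ) (k : ZMod N) :
    dft (cconv h x) k = dft h k * dft x k := by
  simp only [dft_eq_zmodDFT, ZMod.dft_apply, cconv, smul_eq_mul]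
  rw [Finset.sum_mul_sum]
  simp only [Finset.mul_sum]
  rw [Finset.sum_comm]
  refine Finset.sum_congr rfl fun s _ => Fintype.sum_equiv (Equiv.subRight s) _ _ fun t => ?_
  rw [Equiv.subRight_apply, show -(t * k) = -(s * k) + -((t - s) * k) by ring,
    AddChar.map_add_eq_mul]
  ring

-- Parseval, read off from the inversion formula `𝓕 (𝓕 x) = fun t ↦ N • x (-t)`.
lemma sum_norm_dft_sq (x : ZMod N → ℂ) :
    ∑ k, ‖dft x k‖ ^ 2 = N * ∑ t, ‖x t‖ ^ 2 := by
  suffices h : ∑ k, (starRingEnd ℂ) (𝓕 x k) * 𝓕 x k = N * ∑ t, (starRingEnd ℂ) (x t) * x t by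
    simp only [dft_eq_zmodDFT, Complex.conj_mul'] at h ⊢
    exact_mod_cast h
  have hinv : ∀ t, ∑ k, ZMod.stdAddChar (t * k) * 𝓕 x k = N * x t := fun t => by
    simpa [ZMod.dft_apply, mul_comm] using congr_fun (ZMod.dft_dft x) (-t)
  calc ∑ k, (starRingEnd ℂ) (𝓕 x k) * 𝓕 x k
      = ∑ k, ∑ t, (starRingEnd ℂ) (x t) * (ZMod.stdAddChar (t * k) * 𝓕 x k) := by
        simp only [ZMod.dft_apply, smul_eq_mul, map_sum, map_mul, Finset.sum_mul,
          ← AddChar.map_neg_eq_conj, neg_neg]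
        exact Finset.sum_congr rfl fun k _ => Finset.sum_congr rfl fun t _ => by ring
    _ = N * ∑ t, (starRingEnd ℂ) (x t) * x t := by
        rw [Finset.sum_comm]
        simp only [← Finset.mul_sum, hinv]
        rw [Finset.mul_sum]
        exact Finset.sum_congr rfl fun t _ => by ring

lemma enorm2_nonneg (x : ZMod N → ℂ) : 0 ≤ enorm2 x := Real.sqrt_nonneg _

@[simp]
lemma enorm2_zero : enorm2 (0 : ZMod N → ℂ) = 0 := by simp [enorm2]

lemma enorm2_smul (c : ℂ) (x : ZMod N → ℂ) : enorm2 (c • x) = ‖c‖ * enorm2 x := by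
  simp only [enorm2, Pi.smul_apply, smul_eq_mul, norm_mul, mul_pow, ← Finset.mul_sum]
  rw [Real.sqrt_mul (by positivity), Real.sqrt_sq (norm_nonneg c)]

lemma enorm2_addChar (ψ : AddChar (ZMod N) ℂ) : enorm2 ψ = √N := by
  simp [enorm2]

lemma enorm2_cconv_le {C : ℝ} {h : ZMod N → ℂ} (hC : ∀ k, ‖dft h k‖ ≤ C) (x : ZMod N → ℂ) :
    enorm2 (cconv h x) ≤ C * enorm2 x := by
  have hC0 : 0 ≤ C := (norm_nonneg _).trans (hC 0)
  have hN : (0 : ℝ) < N := by exact_mod_cast Nat.pos_of_neZero N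
  have hsq : N * ∑ t, ‖cconv h x t‖ ^ 2 ≤ N * (C ^ 2 * ∑ t, ‖x t‖ ^ 2) :=
    calc N * ∑ t, ‖cconv h x t‖ ^ 2
        = ∑ k, ‖dft h k‖ ^ 2 * ‖dft x k‖ ^ 2 := by
          simp only [← sum_norm_dft_sq, dft_cconv, norm_mul, mul_pow]
      _ ≤ ∑ k, C ^ 2 * ‖dft x k‖ ^ 2 := by gcongr with k; exact hC k
      _ = N * (C ^ 2 * ∑ t, ‖x t‖ ^ 2) := by rw [← Finset.mul_sum, sum_norm_dft_sq]; ring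
  rw [enorm2, enorm2, ← Real.sqrt_sq hC0, ← Real.sqrt_mul (sq_nonneg C)]
  exact Real.sqrt_le_sqrt (le_of_mul_le_mul_left hsq hN)

@[simp]
lemma cconv_zero (h : ZMod N → ℂ) : cconv h 0 = 0 := by
  funext t
  simp [cconv]

lemma cconv_smul (h : ZMod N → ℂ) (c : ℂ) (x : ZMod N → ℂ) :
    cconv h (c • x) = c • cconv h x := by
  funext t
  simp only [cconv, Pi.smul_apply, smul_eq_mul, Finset.mul_sum]
  exact Finset.sum_congr rfl fun s _ => by ring

lemma cconv_addChar (h : ZMod N → ℂ) (ψ : AddChar (ZMod N) ℂ) :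
    cconv h ψ = (∑ s, h s * ψ (-s)) • ⇑ψ := by
  funext t
  simp only [cconv, Pi.smul_apply, smul_eq_mul, Finset.sum_mul, sub_eq_add_neg, add_comm t,
    AddChar.map_add_eq_mul, mul_assoc]

lemma exists_enorm2_eq_one_enorm2_cconv_eq (h : ZMod N → ℂ) (k : ZMod N) :
    ∃ v, enorm2 v = 1 ∧ enorm2 (cconv h v) = ‖dft h k‖ := by
  have hN : (0 : ℝ) < √N := Real.sqrt_pos.2 (by exact_mod_cast Nat.pos_of_neZero N)
  set ψ := ZMod.stdAddChar.mulShift k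
  have hψ : ∑ s, h s * ψ (-s) = dft h k := by
    simp only [dft_eq_zmodDFT, ZMod.dft_apply, smul_eq_mul, ψ, AddChar.mulShift_apply]
    exact Finset.sum_congr rfl fun s _ => by rw [mul_comm, mul_neg, mul_comm s]
  refine ⟨(√N : ℂ)⁻¹ • ⇑ψ, ?_, ?_⟩
  · rw [enorm2_smul, enorm2_addChar, norm_inv, Complex.norm_real, Real.norm_of_nonneg hN.le,
      inv_mul_cancel₀ hN.ne']
  · rw [cconv_smul, cconv_addChar, hψ, smul_smul, enorm2_smul, enorm2_addChar, norm_mul,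
      norm_inv, Complex.norm_real, Real.norm_of_nonneg hN.le]
    field_simp

end

def sparseUnitBall (n N : ℕ) [NeZero N] : Set (Fin n → ZMod N → ℂ) :=
  {x | {j | x j ≠ 0}.ncard ≤ 1 ∧ ∀ j, enorm2 (x j) ≤ 1}

section

variable {N m n : ℕ} [NeZero N] (w : Fin m → Fin n → ZMod N → ℂ)

lemma mimo_of_forall_ne_eq_zero {x : Fin n → ZMod N → ℂ} {j₀ : Fin n}
    (hx : ∀ j ≠ j₀, x j = 0) (i : Fin m) : mimo w x i = cconv (w i j₀) (x j₀) :=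
  Finset.sum_eq_single_of_mem j₀ (Finset.mem_univ _) fun j _ hj => by
    rw [hx j hj, cconv_zero]

lemma mimo_single (j : Fin n) (v : ZMod N → ℂ) (i : Fin m) :
    mimo w (Pi.single j v) i = cconv (w i j) v := by
  rw [mimo_of_forall_ne_eq_zero (j₀ := j) w (fun j' hj' => by simp [hj']),
    Pi.single_eq_same]

lemma single_mem_sparseUnitBall {j : Fin n} {v : ZMod N → ℂ} (hv : enorm2 v ≤ 1) :
    Pi.single j v ∈ sparseUnitBall n N := by
  refine ⟨?_, fun j' => ?_⟩
  · refine (Set.ncard_le_ncard (t := {j}) (fun j' hj' => ?_)).trans (Set.ncard_singleton j).le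
    by_contra hne
    exact hj' (Pi.single_eq_of_ne (M := fun _ => ZMod N → ℂ) hne v)
  · rcases eq_or_ne j' j with rfl | hne
    · rwa [Pi.single_eq_same]
    · simp [Pi.single_eq_of_ne hne]

lemma enorm2_mimo_le {C : ℝ} {x : Fin n → ZMod N → ℂ} (hx : x ∈ sparseUnitBall n N) {i : Fin m}
    (hC : ∀ j k, ‖dft (w i j) k‖ ≤ C) (hC0 : 0 ≤ C) : enorm2 (mimo w x i) ≤ C := by
  obtain ⟨hsupp, hunit⟩ := hx
  by_cases hzero : ∀ j, x j = 0
  · have : mimo w x i = 0 := Finset.sum_eq_zero fun j _ => by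
      rw [hzero j, cconv_zero]
    rw [this, enorm2_zero]
    exact hC0
  push Not at hzero
  obtain ⟨j₀, hj₀⟩ := hzero
  have hx : ∀ j ≠ j₀, x j = 0 := fun j hj => by
    by_contra hxj
    exact hj (((Set.ncard_le_one).1 hsupp) j hxj j₀ hj₀)
  rw [mimo_of_forall_ne_eq_zero w hx]
  calc enorm2 (cconv (w i j₀) (x j₀)) ≤ C * enorm2 (x j₀) := enorm2_cconv_le (hC j₀) _
    _ ≤ C := mul_le_of_le_one_right hC0 (hunit j₀)

end

theorem san_norm_eq_max_dft_general {N m n : ℕ} [NeZero N]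
    (w : Fin m → Fin n → ZMod N → ℂ) :
    sSup ((fun x : Fin n → ZMod N → ℂ => ⨆ i : Fin m, enorm2 (mimo w x i)) ''
        {x | {j | x j ≠ 0}.ncard ≤ 1 ∧ ∀ j, enorm2 (x j) ≤ 1}) =
      ⨆ i : Fin m, ⨆ j : Fin n, ⨆ k : ZMod N, ‖dft (w i j) k‖ := by
  change sSup ((fun x => ⨆ i, enorm2 (mimo w x i)) '' sparseUnitBall n N) = _
  set M := ⨆ i : Fin m, ⨆ j : Fin n, ⨆ k : ZMod N, ‖dft (w i j) k‖
  have hM0 : 0 ≤ M := Real.iSup_nonneg fun i => Real.iSup_nonneg fun j => Real.iSup_nonneg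
    fun k => norm_nonneg _
  have hM : ∀ i j k, ‖dft (w i j) k‖ ≤ M := fun i j k =>
    le_ciSup_of_le (Finite.bddAbove_range _) i <|
      le_ciSup_of_le (Finite.bddAbove_range _) j <|
        le_ciSup (f := fun k => ‖dft (w i j) k‖) (Finite.bddAbove_range _) k
  have hub : ∀ x ∈ sparseUnitBall n N, ⨆ i, enorm2 (mimo w x i) ≤ M := fun x hx =>
    Real.iSup_le (fun i => enorm2_mimo_le w hx (hM i) hM0) hM0
  refine le_antisymm (Real.sSup_le (Set.forall_mem_image.2 hub) hM0) ?_
  have hS0 : 0 ≤ sSup ((fun x => ⨆ i, enorm2 (mimo w x i)) '' sparseUnitBall n N) :=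
    Real.sSup_nonneg <| Set.forall_mem_image.2 fun x _ =>
      Real.iSup_nonneg fun i => enorm2_nonneg _
  refine Real.iSup_le (fun i => Real.iSup_le (fun j => Real.iSup_le (fun k => ?_) hS0) hS0) hS0
  obtain ⟨v, hv, hgain⟩ := exists_enorm2_eq_one_enorm2_cconv_eq (w i j) k
  calc ‖dft (w i j) k‖ = enorm2 (mimo w (Pi.single j v) i) := by rw [mimo_single, hgain]
    _ ≤ ⨆ i', enorm2 (mimo w (Pi.single j v) i') :=
        le_ciSup (f := fun i' => enorm2 (mimo w (Pi.single j v) i')) (Finite.bddAbove_range _) i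
    _ ≤ _ := le_csSup ⟨M, Set.forall_mem_image.2 hub⟩
        (Set.mem_image_of_mem _ (single_mem_sparseUnitBall hv.le))

/-- The sparsity-aware norm `‖W‖_{0,∞}` of a MIMO cyclic convolution equals the
largest absolute value of the Fourier coefficients of its kernels. -/
theorem san_norm_eq_max_dft {N m n : ℕ} [NeZero N] (hm : 0 < m) (hn : 0 < n)
    (w : Fin m → Fin n → ZMod N → ℂ) :
    sSup ((fun x : Fin n → ZMod N → ℂ => ⨆ i : Fin m, enorm2 (mimo w x i)) ''
        {x | {j | x j ≠ 0}.ncard ≤ 1 ∧ ∀ j, enorm2 (x j) ≤ 1}) =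
      ⨆ i : Fin m, ⨆ j : Fin n, ⨆ k : ZMod N, ‖dft (w i j) k‖ :=
  san_norm_eq_max_dft_general w
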